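/- arXiv:1510.00500 — 2 statements merged into one kernel-verified Lean document; each statement's English description precedes it below -/
import Mathlib

section
/- Let v : ℝ^N → [0,∞) be continuous, let x₀ ∈ ℝ^N with v(x₀) > 0, and let σ > 0, K > 0. Assume that for every open ball B centered at x₀ with B ⊆ {x : v(x) > 0}, the function x ↦ v(x)^(−σ) is K-Lipschitz on B. Then v(x) > 0 for all x ∈ ℝ^N. -/
open Real

theorem stmt_11 (N : ℕ) (v : EuclideanSpace ℝ (Fin N) → ℝ)
    (hv : Continuous v) (hnn : ∀ x, 0 ≤ v x)
    (x₀ : EuclideanSpace ℝ (Fin N)) (hx₀ : 0 < v x₀)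
    (σ K : ℝ) (hσ : 0 < σ) (hK : 0 < K)
    (hLip : ∀ r > (0 : ℝ), Metric.ball x₀ r ⊆ {x | 0 < v x} →
      LipschitzOnWith (Real.toNNReal K) (fun x => v x ^ (-σ)) (Metric.ball x₀ r)) :
    ∀ x, 0 < v x := by
  by_contra h
  push_neg at h
  obtain ⟨x, hx⟩ := h
  have hx0 : v x = 0 := le_antisymm hx (hnn x)
  -- the positivity set is open
  have hopen : IsOpen {y | 0 < v y} := isOpen_lt continuous_const hv
  -- a small ball around x₀ lies in the positivity set
  obtain ⟨r₀, hr₀, hball₀⟩ := Metric.isOpen_iff.1 hopen x₀ hx₀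
  set T : Set ℝ := {r : ℝ | 0 < r ∧ Metric.ball x₀ r ⊆ {y | 0 < v y}} with hT
  have hTne : T.Nonempty := ⟨r₀, hr₀, hball₀⟩
  have hTbdd : BddAbove T := by
    refine ⟨dist x₀ x, fun r hr => ?_⟩
    by_contra hc
    push_neg at hc
    have : x ∈ Metric.ball x₀ r := by
      rw [Metric.mem_ball, dist_comm]; exact hc
    have := hr.2 this
    simp only [Set.mem_setOf_eq, hx0] at this
    exact lt_irrefl 0 this
  set R := sSup T with hR
  have hRpos : 0 < R := lt_of_lt_of_le hr₀ (le_csSup hTbdd ⟨hr₀, hball₀⟩)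
  have hballR : Metric.ball x₀ R ⊆ {y | 0 < v y} := by
    intro y hy
    rw [Metric.mem_ball] at hy
    obtain ⟨r, hrT, hlt⟩ := exists_lt_of_lt_csSup hTne hy
    exact hrT.2 (Metric.mem_ball.2 hlt)
  have hlip := hLip R hRpos hballR
  set C := v x₀ ^ (-σ) + K * R with hC
  have hCpos : 0 < C := add_pos (Real.rpow_pos_of_pos hx₀ _) (mul_pos hK hRpos)
  set m := C⁻¹ ^ (1 / σ) with hm
  have hmpos : 0 < m := Real.rpow_pos_of_pos (inv_pos.2 hCpos) _
  have hx₀mem : x₀ ∈ Metric.ball x₀ R := Metric.mem_ball_self hRpos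
  have hlow : ∀ y ∈ Metric.ball x₀ R, m ≤ v y := by
    intro y hy
    have hvy : 0 < v y := hballR hy
    have hd := hlip.dist_le_mul y hy x₀ hx₀mem
    rw [Real.coe_toNNReal K hK.le] at hd
    rw [Real.dist_eq] at hd
    have h2 : v y ^ (-σ) - v x₀ ^ (-σ) ≤ K * dist y x₀ := (le_abs_self _).trans hd
    have h3 : dist y x₀ ≤ R := le_of_lt (Metric.mem_ball.1 hy)
    have h1 : v y ^ (-σ) ≤ C := by nlinarith [hK.le]
    have h4 : C⁻¹ ≤ v y ^ σ := by
      rw [Real.rpow_neg hvy.le] at h1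
      have := inv_anti₀ (inv_pos.2 (Real.rpow_pos_of_pos hvy σ)) h1
      rwa [inv_inv] at this
    calc m = C⁻¹ ^ (1 / σ) := rfl
      _ ≤ (v y ^ σ) ^ (1 / σ) :=
        Real.rpow_le_rpow (inv_pos.2 hCpos).le h4 (by positivity)
      _ = v y := by
        rw [← Real.rpow_mul hvy.le, mul_one_div, div_self hσ.ne', Real.rpow_one]
  -- extend to the closed ball by continuity
  have hclosed : Metric.closedBall x₀ R ⊆ {y | m ≤ v y} := by
    have : closure (Metric.ball x₀ R) ⊆ {y | m ≤ v y} :=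
      closure_minimal hlow (isClosed_le continuous_const hv)
    rwa [closure_ball x₀ hRpos.ne'] at this
  have hcsub : Metric.closedBall x₀ R ⊆ {y | 0 < v y} :=
    fun y hy => lt_of_lt_of_le hmpos (hclosed hy)
  obtain ⟨ε, hε, hthick⟩ :=
    (isCompact_closedBall x₀ R).exists_thickening_subset_open hopen hcsub
  have hbig : Metric.ball x₀ (ε + R) ⊆ {y | 0 < v y} := by
    rw [← thickening_closedBall hε hRpos.le x₀]
    exact hthick
  have : ε + R ∈ T := ⟨by linarith, hbig⟩
  have := le_csSup hTbdd this
  linarith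
end

section
/- Let v : ℝ^N → [0,∞) be continuous, let x₀ ∈ ℝ^N with v(x₀) > 0, and let K > 0. Assume that for every open ball B centered at x₀ with B ⊆ {x : v(x) > 0}, the function x ↦ log v(x) is K-Lipschitz on B. Then v(x) ≥ v(x₀) e^(−K|x−x₀|) > 0 for all x ∈ ℝ^N. -/
open Real

theorem stmt_12 (N : ℕ) (v : EuclideanSpace ℝ (Fin N) → ℝ)
    (hv : Continuous v) (hnn : ∀ x, 0 ≤ v x)
    (x₀ : EuclideanSpace ℝ (Fin N)) (hx₀ : 0 < v x₀)
    (K : ℝ) (hK : 0 < K)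
    (hLip : ∀ r > (0 : ℝ), Metric.ball x₀ r ⊆ {x | 0 < v x} →
      LipschitzOnWith (Real.toNNReal K) (fun x => Real.log (v x)) (Metric.ball x₀ r)) :
    ∀ x, 0 < v x₀ * Real.exp (-K * ‖x - x₀‖) ∧
      v x₀ * Real.exp (-K * ‖x - x₀‖) ≤ v x := by
  set U : Set (EuclideanSpace ℝ (Fin N)) := {x | 0 < v x} with hU
  have hUopen : IsOpen U := isOpen_lt continuous_const hv
  -- Step A: Lipschitz bound gives pointwise lower bound on the ball
  have stepA : ∀ r > (0 : ℝ), Metric.ball x₀ r ⊆ U →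
      ∀ x ∈ Metric.ball x₀ r, v x₀ * Real.exp (-K * ‖x - x₀‖) ≤ v x := by
    intro r hr hsub x hx
    have hlip := hLip r hr hsub
    have hx0mem : x₀ ∈ Metric.ball x₀ r := Metric.mem_ball_self hr
    have hdist := hlip.dist_le_mul x hx x₀ hx0mem
    rw [Real.coe_toNNReal K hK.le] at hdist
    have hvx : 0 < v x := hsub hx
    have h1 : Real.log (v x₀) - K * dist x x₀ ≤ Real.log (v x) := by
      have := abs_le.mp (by rwa [Real.dist_eq] at hdist) |>.1
      linarith
    have hdn : dist x x₀ = ‖x - x₀‖ := dist_eq_norm x x₀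
    calc v x₀ * Real.exp (-K * ‖x - x₀‖)
        = Real.exp (Real.log (v x₀) + (-K * ‖x - x₀‖)) := by
          rw [Real.exp_add, Real.exp_log hx₀]
      _ ≤ Real.exp (Real.log (v x)) := by
          apply Real.exp_le_exp.mpr
          rw [← hdn]; linarith
      _ = v x := Real.exp_log hvx
  -- the set of good radii
  set S : Set ℝ := {r | 0 < r ∧ Metric.ball x₀ r ⊆ U} with hS
  -- Key claim: good radii can be extended
  have key : ∀ r ∈ S, ∃ δ > (0 : ℝ), r + δ ∈ S := by
    rintro r ⟨hr, hsub⟩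
    have hbound := stepA r hr hsub
    -- extend the bound to the closed ball by continuity
    have hclosed : IsClosed {x | v x₀ * Real.exp (-K * ‖x - x₀‖) ≤ v x} := by
      apply isClosed_le _ hv
      exact continuous_const.mul (Real.continuous_exp.comp
        (continuous_const.mul ((continuous_id.sub continuous_const).norm)))
    have hcb : Metric.closedBall x₀ r ⊆ {x | v x₀ * Real.exp (-K * ‖x - x₀‖) ≤ v x} := by
      rw [← closure_ball x₀ hr.ne']
      exact closure_minimal hbound hclosed
    have hcbU : Metric.closedBall x₀ r ⊆ U := fun x hx =>
      lt_of_lt_of_le (mul_pos hx₀ (Real.exp_pos _)) (hcb hx)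
    obtain ⟨δ, hδ, hthick⟩ :=
      (isCompact_closedBall x₀ r).exists_thickening_subset_open hUopen hcbU
    refine ⟨δ, hδ, by linarith, ?_⟩
    intro x hx
    apply hthick
    rw [thickening_closedBall hδ hr.le]
    rw [Metric.mem_ball] at hx ⊢
    linarith
  -- S is nonempty
  have hSne : S.Nonempty := by
    obtain ⟨ε, hε, hball⟩ := Metric.isOpen_iff.mp hUopen x₀ hx₀
    exact ⟨ε, hε, hball⟩
  -- S is not bounded above
  have hnb : ¬ BddAbove S := by
    intro hbdd
    set R := sSup S with hR
    have hRS : R ∈ S := by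
      obtain ⟨r, hr⟩ := id hSne
      have hRpos : 0 < R := lt_of_lt_of_le hr.1 (le_csSup hbdd hr)
      refine ⟨hRpos, ?_⟩
      intro x hx
      rw [Metric.mem_ball] at hx
      obtain ⟨s, hsS, hxs⟩ := exists_lt_of_lt_csSup hSne hx
      exact hsS.2 (Metric.mem_ball.mpr hxs)
    obtain ⟨δ, hδ, hmem⟩ := key R hRS
    have := le_csSup hbdd hmem
    linarith
  -- conclude
  intro x
  refine ⟨mul_pos hx₀ (Real.exp_pos _), ?_⟩
  rw [not_bddAbove_iff] at hnb
  obtain ⟨r, hrS, hr⟩ := hnb ‖x - x₀‖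
  have hx : x ∈ Metric.ball x₀ r := by
    rw [Metric.mem_ball, dist_eq_norm]; exact hr
  exact stepA r hrS.1 hrS.2 x hx
end
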